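/- Let G be a Kan cubical monoid with unit 1 as basepoint and n ≥ 1. Then the homotopy group π_n(G) is abelian; equivalently, for all x, y ∈ \tilde G_n one has xy ∼ yx. -/

import Mathlib

universe u

/-- The Kan condition for a cubical set, given by its family of sets and face maps
(`d n j ε : X (n+1) → X n` is the face `∂_j^ε`, `1 ≤ j ≤ n+1`). -/
def IsKan (X : ℕ → Type u) (d : ∀ n : ℕ, ℕ → Bool → X (n + 1) → X n) : Prop :=
  (∀ (i : ℕ) (α : Bool), 1 ≤ i → i ≤ 1 → ∀ x : ℕ → Bool → X 0,
    ∃ z : X 1, ∀ (j : ℕ) (ε : Bool), 1 ≤ j → j ≤ 1 → (j, ε) ≠ (i, α) → d 0 j ε z = x j ε) ∧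
  (∀ (n i : ℕ) (α : Bool), 1 ≤ i → i ≤ n + 2 → ∀ x : ℕ → Bool → X (n + 1),
    (∀ (j k : ℕ) (ε ω : Bool), 1 ≤ j → j < k → k ≤ n + 2 →
      (j, ε) ≠ (i, α) → (k, ω) ≠ (i, α) → d n j ε (x k ω) = d n (k - 1) ω (x j ε)) →
    ∃ z : X (n + 2), ∀ (j : ℕ) (ε : Bool), 1 ≤ j → j ≤ n + 2 → (j, ε) ≠ (i, α) →
      d (n + 1) j ε z = x j ε)

/-- `\tilde G_n`: the set of `n`-cubes all of whose faces are the unit. -/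
def cubTilde (G : ℕ → Type u) [∀ n, Monoid (G n)]
    (d : ∀ n : ℕ, ℕ → Bool → (G (n + 1) →* G n)) : ∀ n, Set (G n)
  | 0 => Set.univ
  | (n + 1) => {x | ∀ (j : ℕ) (ε : Bool), 1 ≤ j → j ≤ n + 1 → d n j ε x = 1}

/-- The homotopy relation `x ∼ y` on `\tilde G_n`. -/
def cubRel (G : ℕ → Type u) [∀ n, Monoid (G n)]
    (d : ∀ n : ℕ, ℕ → Bool → (G (n + 1) →* G n)) (n : ℕ) (x y : G n) : Prop :=
  ∃ z : G (n + 1), d n 1 false z = x ∧ d n 1 true z = y ∧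
    ∀ (j : ℕ) (ε : Bool), 2 ≤ j → j ≤ n + 1 → d n j ε z = 1


/-!
Pick `t` with `∂₂⁰ t = 1` and `∂₂¹ t = y` (a Kan filler). Off direction 2 all faces of `s₂ x` are
trivial, so the cubes `s₂ x * t` and `t * s₂ x` have the same faces except the `(2, 1)`-face, which
is `x * y` for the first and `y * x` for the second. Two fillers of the same open box have homotopic
missing faces: fill the box in one dimension higher whose `(1, ε)`-faces are the two fillers and
whose other faces are degenerate.
-/

section CubicalSet

variable {X : ℕ → Type u} {d : ∀ n : ℕ, ℕ → Bool → X (n + 1) → X n}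
  {s : ∀ n : ℕ, ℕ → X n → X (n + 1)}

theorem IsKan.exists_homotopy_of_faces_eq (hkan : IsKan X d)
    (hdd : ∀ (n i j : ℕ) (α ε : Bool), 1 ≤ i → i < j → j ≤ n + 2 →
      ∀ x, d n i α (d (n + 1) j ε x) = d n (j - 1) ε (d (n + 1) i α x))
    (hds_eq : ∀ (n i : ℕ) (α : Bool), 1 ≤ i → i ≤ n + 1 → ∀ x, d n i α (s n i x) = x)
    (hds_gt : ∀ (n i j : ℕ) (α : Bool), 1 ≤ j → j < i → i ≤ n + 2 →
      ∀ x, d (n + 1) i α (s (n + 1) j x) = s n j (d n (i - 1) α x))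
    {m : ℕ} (A B : X (m + 2))
    (hAB : ∀ (j : ℕ) (ε : Bool), 1 ≤ j → j ≤ m + 2 → (j, ε) ≠ (2, true) →
      d (m + 1) j ε A = d (m + 1) j ε B) :
    ∃ z : X (m + 2), d (m + 1) 1 false z = d (m + 1) 2 true A ∧
      d (m + 1) 1 true z = d (m + 1) 2 true B ∧
      ∀ (j : ℕ) (ε : Bool), 2 ≤ j → j ≤ m + 2 →
        d (m + 1) j ε z = s m 1 (d m (j - 1) ε (d (m + 1) 2 true A)) := by
  set box : ℕ → Bool → X (m + 2) := fun j ε =>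
    if j = 1 then (if ε then B else A) else s (m + 1) 1 (d (m + 1) (j - 1) ε A) with hbox
  have compat : ∀ (j k : ℕ) (ε ω : Bool), 1 ≤ j → j < k → k ≤ m + 3 →
      (j, ε) ≠ (3, true) → (k, ω) ≠ (3, true) →
      d (m + 1) j ε (box k ω) = d (m + 1) (k - 1) ω (box j ε) := by
    intro j k ε ω hj hjk hk _ hkω
    simp only [hbox, if_neg (show k ≠ 1 by omega)]
    rcases eq_or_ne j 1 with rfl | hj1
    · rw [hds_eq (m + 1) 1 ε le_rfl (by omega)]
      cases ε
      · rfl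
      · refine hAB _ _ (by omega) (by omega) fun h => hkω ?_
        obtain ⟨hk3, rfl⟩ := Prod.mk.inj h
        rw [show k = 3 by omega]
    · rw [if_neg hj1, hds_gt m j 1 ε le_rfl (by omega) (by omega),
        hds_gt m (k - 1) 1 ω le_rfl (by omega) (by omega),
        hdd m (j - 1) (k - 1) ε ω (by omega) (by omega) (by omega)]
  obtain ⟨W, hW⟩ := hkan.2 (m + 1) 3 true (by omega) (by omega) box compat
  refine ⟨d (m + 2) 3 true W, ?_, ?_, fun j ε hj hjm => ?_⟩
  · rw [hdd (m + 1) 1 3 false true le_rfl (by omega) (by omega),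
      hW 1 false le_rfl (by omega) (by simp)]
    rfl
  · rw [hdd (m + 1) 1 3 true true le_rfl (by omega) (by omega),
      hW 1 true le_rfl (by omega) (by simp)]
    rfl
  · rcases eq_or_ne j 2 with rfl | hj2
    · rw [hdd (m + 1) 2 3 ε true (by omega) (by omega) (by omega),
        hW 2 ε (by omega) (by omega) (by simp)]
      simp only [hbox, if_neg (show (2 : ℕ) ≠ 1 by omega)]
      rw [hds_gt m 2 1 true le_rfl (by omega) (by omega),
        hdd m 1 2 ε true le_rfl (by omega) (by omega)]
    · have h := hdd (m + 1) 3 (j + 1) true ε (by omega) (by omega) (by omega) W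
      rw [Nat.add_sub_cancel] at h
      rw [← h, hW (j + 1) ε (by omega) (by omega) (by simp; omega)]
      simp only [hbox, if_neg (show j + 1 ≠ 1 by omega)]
      rw [hds_gt m 3 1 true le_rfl (by omega) (by omega), Nat.add_sub_cancel,
        ← hdd m 2 j true ε (by omega) (by omega) (by omega)]

end CubicalSet

section CubicalMonoid

variable {G : ℕ → Type u} [∀ n, Monoid (G n)] {d : ∀ n : ℕ, ℕ → Bool → (G (n + 1) →* G n)}

theorem one_mem_cubTilde (n : ℕ) : (1 : G n) ∈ cubTilde G d n := by
  cases n with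
  | zero => trivial
  | succ n => exact fun j ε _ _ => map_one _

theorem IsKan.exists_filler_of_mem_cubTilde (hkan : IsKan G (fun n i ε x => d n i ε x))
    {n i : ℕ} (α : Bool) (hi : 1 ≤ i) (hin : i ≤ n + 2) (box : ℕ → Bool → G (n + 1))
    (hbox : ∀ j ε, box j ε ∈ cubTilde G d (n + 1)) :
    ∃ t : G (n + 2), ∀ (j : ℕ) (ε : Bool), 1 ≤ j → j ≤ n + 2 → (j, ε) ≠ (i, α) →
      d (n + 1) j ε t = box j ε :=
  hkan.2 n i α hi hin box fun j k ε ω hj hjk hk _ _ => by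
    beta_reduce
    rw [hbox k ω j ε hj (by omega), hbox j ε (k - 1) ω (by omega) (by omega)]

theorem face_degen_two_of_ne_two {s : ∀ n : ℕ, ℕ → (G n →* G (n + 1))}
    (hds_lt : ∀ (n i j : ℕ) (α : Bool), 1 ≤ i → i < j → j ≤ n + 2 →
      ∀ x, d (n + 1) i α (s (n + 1) j x) = s n (j - 1) (d n i α x))
    (hds_gt : ∀ (n i j : ℕ) (α : Bool), 1 ≤ j → j < i → i ≤ n + 2 →
      ∀ x, d (n + 1) i α (s (n + 1) j x) = s n j (d n (i - 1) α x))
    {n : ℕ} {x : G (n + 1)} (hx : x ∈ cubTilde G d (n + 1)) {j : ℕ} (ε : Bool)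
    (hj : 1 ≤ j) (hjn : j ≤ n + 2) (hj2 : j ≠ 2) :
    d (n + 1) j ε (s (n + 1) 2 x) = 1 := by
  rcases eq_or_ne j 1 with rfl | hj1
  · rw [hds_lt n 1 2 ε le_rfl (by omega) (by omega), hx 1 ε le_rfl (by omega), map_one]
  · rw [hds_gt n j 2 ε (by omega) (by omega) hjn, hx (j - 1) ε (by omega) (by omega), map_one]

theorem face_degen_two_mul_comm {s : ∀ n : ℕ, ℕ → (G n →* G (n + 1))}
    (hds_lt : ∀ (n i j : ℕ) (α : Bool), 1 ≤ i → i < j → j ≤ n + 2 →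
      ∀ x, d (n + 1) i α (s (n + 1) j x) = s n (j - 1) (d n i α x))
    (hds_eq : ∀ (n i : ℕ) (α : Bool), 1 ≤ i → i ≤ n + 1 → ∀ x, d n i α (s n i x) = x)
    (hds_gt : ∀ (n i j : ℕ) (α : Bool), 1 ≤ j → j < i → i ≤ n + 2 →
      ∀ x, d (n + 1) i α (s (n + 1) j x) = s n j (d n (i - 1) α x))
    {n : ℕ} {x : G (n + 1)} (hx : x ∈ cubTilde G d (n + 1)) {t : G (n + 2)}
    (ht : d (n + 1) 2 false t = 1) (j : ℕ) (ε : Bool) (hj : 1 ≤ j) (hjn : j ≤ n + 2)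
    (hjε : (j, ε) ≠ (2, true)) :
    d (n + 1) j ε (s (n + 1) 2 x * t) = d (n + 1) j ε (t * s (n + 1) 2 x) := by
  rcases eq_or_ne j 2 with rfl | hj2
  · obtain rfl : ε = false := by simpa using hjε
    rw [map_mul, map_mul, hds_eq _ 2 false (by omega) (by omega), ht, mul_one, one_mul]
  · rw [map_mul, map_mul, face_degen_two_of_ne_two hds_lt hds_gt hx ε hj hjn hj2, one_mul,
      mul_one]

end CubicalMonoid

theorem stmt5_general (G : ℕ → Type u) [∀ n, Monoid (G n)]
    (d : ∀ n : ℕ, ℕ → Bool → (G (n + 1) →* G n))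
    (s : ∀ n : ℕ, ℕ → (G n →* G (n + 1)))
    (hdd : ∀ (n i j : ℕ) (α ε : Bool), 1 ≤ i → i < j → j ≤ n + 2 →
      ∀ x, d n i α (d (n + 1) j ε x) = d n (j - 1) ε (d (n + 1) i α x))
    (hds_lt : ∀ (n i j : ℕ) (α : Bool), 1 ≤ i → i < j → j ≤ n + 2 →
      ∀ x, d (n + 1) i α (s (n + 1) j x) = s n (j - 1) (d n i α x))
    (hds_eq : ∀ (n i : ℕ) (α : Bool), 1 ≤ i → i ≤ n + 1 → ∀ x, d n i α (s n i x) = x)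
    (hds_gt : ∀ (n i j : ℕ) (α : Bool), 1 ≤ j → j < i → i ≤ n + 2 →
      ∀ x, d (n + 1) i α (s (n + 1) j x) = s n j (d n (i - 1) α x))
    (hkan : IsKan G (fun n i ε x => d n i ε x)) (n : ℕ) :
    ∀ x y : G (n + 1), x ∈ cubTilde G d (n + 1) → y ∈ cubTilde G d (n + 1) →
      cubRel G d (n + 1) (x * y) (y * x) := by
  intro x y hx hy
  obtain ⟨t, ht⟩ := hkan.exists_filler_of_mem_cubTilde true le_rfl (by omega)
    (fun _ ε => if ε then y else 1) fun _ ε => by cases ε <;> simp [hy, one_mem_cubTilde]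
  have ht0 : d (n + 1) 2 false t = 1 := ht 2 false (by omega) (by omega) (by simp)
  have ht1 : d (n + 1) 2 true t = y := ht 2 true (by omega) (by omega) (by simp)
  have hs2x : ∀ ε, d (n + 1) 2 ε (s (n + 1) 2 x) = x :=
    fun ε => hds_eq _ 2 ε (by omega) (by omega) x
  obtain ⟨z, hz0, hz1, hz⟩ := hkan.exists_homotopy_of_faces_eq (s := fun n i x => s n i x)
    hdd hds_eq hds_gt _ _ (face_degen_two_mul_comm hds_lt hds_eq hds_gt hx ht0)
  refine ⟨z, ?_, ?_, fun j ε hj hjn => ?_⟩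
  · rw [hz0, map_mul, hs2x, ht1]
  · rw [hz1, map_mul, hs2x, ht1]
  · rw [hz j ε hj hjn, map_mul, hs2x, ht1, map_mul, hx (j - 1) ε (by omega) (by omega),
      hy (j - 1) ε (by omega) (by omega), mul_one, map_one]

theorem stmt5 (G : ℕ → Type u) [∀ n, Monoid (G n)]
    (d : ∀ n : ℕ, ℕ → Bool → (G (n + 1) →* G n))
    (s : ∀ n : ℕ, ℕ → (G n →* G (n + 1)))
    (hdd : ∀ (n i j : ℕ) (α ε : Bool), 1 ≤ i → i < j → j ≤ n + 2 →
      ∀ x, d n i α (d (n + 1) j ε x) = d n (j - 1) ε (d (n + 1) i α x))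
    (hss : ∀ (n i j : ℕ), 1 ≤ i → i ≤ j → j ≤ n + 1 →
      ∀ x, s (n + 1) i (s n j x) = s (n + 1) (j + 1) (s n i x))
    (hds_lt : ∀ (n i j : ℕ) (α : Bool), 1 ≤ i → i < j → j ≤ n + 2 →
      ∀ x, d (n + 1) i α (s (n + 1) j x) = s n (j - 1) (d n i α x))
    (hds_eq : ∀ (n i : ℕ) (α : Bool), 1 ≤ i → i ≤ n + 1 → ∀ x, d n i α (s n i x) = x)
    (hds_gt : ∀ (n i j : ℕ) (α : Bool), 1 ≤ j → j < i → i ≤ n + 2 →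
      ∀ x, d (n + 1) i α (s (n + 1) j x) = s n j (d n (i - 1) α x))
    (hkan : IsKan G (fun n i ε x => d n i ε x)) (n : ℕ) :
    ∀ x y : G (n + 1), x ∈ cubTilde G d (n + 1) → y ∈ cubTilde G d (n + 1) →
      cubRel G d (n + 1) (x * y) (y * x) :=
  stmt5_general G d s hdd hds_lt hds_eq hds_gt hkan n
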